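/- arXiv:0801.0079 — 5 statements merged into one kernel-verified Lean document; each statement's English description precedes it below -/
import Mathlib

section
/- (Lemma 3) Let μ̂_{i,m+1}(x_1,…,x_m,x_{m+1}) denote the SDMMSA estimate of the i-th mean computed from data (x_1,n_1),…,(x_{m+1},n_{m+1}). Suppose Ȳ_1 ≤ … ≤ Ȳ_m and Ȳ'_1 ≤ … ≤ Ȳ'_m are both nondecreasing and satisfy Ȳ_v ≤ Ȳ'_v for every v ∈ [1,m]. Then for every i ∈ [1,m+1] and every real Ȳ_{m+1}, μ̂_{i,m+1}(Ȳ_1,…,Ȳ_m,Ȳ_{m+1}) ≤ μ̂_{i,m+1}(Ȳ'_1,…,Ȳ'_m,Ȳ_{m+1}). -/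
open Finset

noncomputable section SDMMSA

/-- Pooled weight `n_{i,j} = ∑_{h=i}^j n_h`. -/
def pooledWeight (n : ℕ → ℝ) (i j : ℕ) : ℝ := ∑ h ∈ Finset.Icc i j, n h

/-- Pooled (weighted) mean `Ȳ_{i,j} = (∑_{h=i}^j n_h Y_h) / n_{i,j}`. -/
def pooledMean (n Y : ℕ → ℝ) (i j : ℕ) : ℝ :=
  (∑ h ∈ Finset.Icc i j, n h * Y h) / pooledWeight n i j

/-- The first SDMMSA index for the data `(Y_1,n_1),…,(Y_t,n_t)`:
the smallest `j ∈ [1,t]` at which `Ȳ_{j,t} = max_{1 ≤ j' ≤ t} Ȳ_{j',t}`. -/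
def firstIdx (n Y : ℕ → ℝ) (t : ℕ) : ℕ :=
  sInf {j | 1 ≤ j ∧ j ≤ t ∧ ∀ j', 1 ≤ j' → j' ≤ t → pooledMean n Y j' t ≤ pooledMean n Y j t}

/-- Fuel-based recursion implementing the SDMMSA step-down procedure: on data range `[1,t]`,
every `i ≥ i₁ = firstIdx n Y t` gets the pooled mean `Ȳ_{i₁,t}` of the top block, and for
`i < i₁` we recurse on the data range `[1, i₁ - 1]`.  A fuel of `t` suffices since the
range shrinks strictly at each step. -/
def sdmmsaAux (n Y : ℕ → ℝ) : ℕ → ℕ → ℕ → ℝ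
  | 0, _, _ => 0
  | fuel + 1, t, i =>
      if firstIdx n Y t ≤ i then pooledMean n Y (firstIdx n Y t) t
      else sdmmsaAux n Y fuel (firstIdx n Y t - 1) i

/-- `muhat n Y k i` is the SDMMSA estimate `μ̂_i` computed from the data
`(Y_1,n_1),…,(Y_k,n_k)`. -/
def muhat (n Y : ℕ → ℝ) (k i : ℕ) : ℝ := sdmmsaAux n Y k k i

/-- The SDMMSA indices `i_u` computed from the data `(Y_1,n_1),…,(Y_k,n_k)`:
`sdIdx n Y k 0 = i_0 = k+1` and `i_{u+1}` is the first SDMMSA index of `[1, i_u - 1]`. -/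
def sdIdx (n Y : ℕ → ℝ) (k : ℕ) : ℕ → ℕ
  | 0 => k + 1
  | u + 1 => firstIdx n Y (sdIdx n Y k u - 1)

/-- The number of steps `h` of the SDMMSA: the first `u` with `i_u = 1`. -/
def sdSteps (n Y : ℕ → ℝ) (k : ℕ) : ℕ := sInf {u | sdIdx n Y k u = 1}

end SDMMSA

/-!
Below the first index `i₁` of the top block, data nondecreasing on `[1, m]` is reproduced exactly
by the step-down procedure (every later block is constant), so `μ̂_i` is the top-block mean `c`
for `i ≥ i₁` and the datum `Y_i` for `i < i₁`. The identity
`n_i (Y_i - Ȳ_{i,t}) = n_{i+1,t} (Ȳ_{i,t} - Ȳ_{i+1,t})` shows that the top-block mean is at most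
the first datum of the block (dropping that datum does not raise the mean) and that the datum just
below the block is strictly smaller than `c` (including it lowers the mean). Raising the data
raises the maximal mean, `c ≤ c'`, and the four cases `i ≥ i₁` or not, `i ≥ i₁'` or not follow
from these inequalities and the monotonicity of the data.
-/

lemma pooledWeight_pos {n : ℕ → ℝ} {i j : ℕ} (hij : i ≤ j)
    (hn : ∀ h ∈ Set.Icc i j, 0 < n h) : 0 < pooledWeight n i j :=
  sum_pos (fun h hh => hn h (mem_Icc.mp hh)) ⟨i, mem_Icc.mpr ⟨le_rfl, hij⟩⟩

lemma pooledMean_self {n : ℕ → ℝ} (Y : ℕ → ℝ) {t : ℕ} (ht : n t ≠ 0) :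
    pooledMean n Y t t = Y t := by
  simp only [pooledMean, pooledWeight, Icc_self, sum_singleton]
  field_simp

lemma pooledMean_mono {n Y Y' : ℕ → ℝ} {i t : ℕ} (hit : i ≤ t)
    (hn : ∀ h ∈ Set.Icc i t, 0 < n h) (hYY' : ∀ h ∈ Set.Icc i t, Y h ≤ Y' h) :
    pooledMean n Y i t ≤ pooledMean n Y' i t := by
  refine div_le_div_of_nonneg_right (sum_le_sum fun h hh => ?_) (pooledWeight_pos hit hn).le
  have hh' := mem_Icc.mp hh
  exact mul_le_mul_of_nonneg_left (hYY' h hh') (hn h hh').le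

lemma mul_sub_pooledMean {n : ℕ → ℝ} (Y : ℕ → ℝ) {i t : ℕ} (hit : i < t)
    (hn : ∀ h ∈ Set.Icc i t, 0 < n h) :
    n i * (Y i - pooledMean n Y i t) =
      pooledWeight n (i + 1) t * (pooledMean n Y i t - pooledMean n Y (i + 1) t) := by
  have hW : 0 < pooledWeight n i t := pooledWeight_pos hit.le hn
  have hW' : 0 < pooledWeight n (i + 1) t :=
    pooledWeight_pos hit fun h hh => hn h (Set.Icc_subset_Icc_left i.le_succ hh)
  have hsplit (f : ℕ → ℝ) : ∑ h ∈ Icc i t, f h = f i + ∑ h ∈ Icc (i + 1) t, f h := by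
    rw [Icc_add_one_left_eq_Ioc, add_sum_Ioc_eq_sum_Icc hit.le]
  have hWsplit := hsplit n
  have hSsplit := hsplit fun h => n h * Y h
  simp only [pooledMean, pooledWeight] at hW hW' ⊢
  field_simp
  rw [hWsplit, hSsplit]
  ring

lemma pooledMean_le_of_pooledMean_succ_le {n Y : ℕ → ℝ} {i t : ℕ} (hit : i < t)
    (hn : ∀ h ∈ Set.Icc i t, 0 < n h) (hle : pooledMean n Y (i + 1) t ≤ pooledMean n Y i t) :
    pooledMean n Y i t ≤ Y i := by
  have hW' : 0 < pooledWeight n (i + 1) t :=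
    pooledWeight_pos hit fun h hh => hn h (Set.Icc_subset_Icc_left i.le_succ hh)
  have key := mul_sub_pooledMean Y hit hn
  have hni := hn i ⟨le_rfl, hit.le⟩
  nlinarith [mul_nonneg hW'.le (sub_nonneg.mpr hle)]

lemma lt_pooledMean_succ_of_pooledMean_lt {n Y : ℕ → ℝ} {i t : ℕ} (hit : i < t)
    (hn : ∀ h ∈ Set.Icc i t, 0 < n h) (hlt : pooledMean n Y i t < pooledMean n Y (i + 1) t) :
    Y i < pooledMean n Y (i + 1) t := by
  have hW' : 0 < pooledWeight n (i + 1) t :=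
    pooledWeight_pos hit fun h hh => hn h (Set.Icc_subset_Icc_left i.le_succ hh)
  have key := mul_sub_pooledMean Y hit hn
  have hni := hn i ⟨le_rfl, hit.le⟩
  nlinarith [mul_pos hW' (sub_pos.mpr hlt)]

lemma firstIdx_spec (n Y : ℕ → ℝ) {t : ℕ} (ht : 1 ≤ t) :
    firstIdx n Y t ∈ Set.Icc 1 t ∧
      ∀ j ∈ Set.Icc 1 t, pooledMean n Y j t ≤ pooledMean n Y (firstIdx n Y t) t := by
  obtain ⟨j, hj, hmax⟩ := exists_max_image (Icc 1 t) (fun j => pooledMean n Y j t)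
    ⟨1, mem_Icc.mpr ⟨le_rfl, ht⟩⟩
  obtain ⟨h1, hjt, hmax⟩ := Nat.sInf_mem (s := {j | 1 ≤ j ∧ j ≤ t ∧ ∀ j', 1 ≤ j' → j' ≤ t →
      pooledMean n Y j' t ≤ pooledMean n Y j t})
    ⟨j, (mem_Icc.mp hj).1, (mem_Icc.mp hj).2, fun j' h1 h2 => hmax j' (mem_Icc.mpr ⟨h1, h2⟩)⟩
  exact ⟨⟨h1, hjt⟩, fun j hj => hmax j hj.1 hj.2⟩

lemma pooledMean_lt_of_lt_firstIdx (n Y : ℕ → ℝ) {t j : ℕ} (ht : 1 ≤ t) (hj : 1 ≤ j)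
    (hlt : j < firstIdx n Y t) : pooledMean n Y j t < pooledMean n Y (firstIdx n Y t) t := by
  obtain ⟨hmem, hmax⟩ := firstIdx_spec n Y ht
  by_contra! hge
  exact Nat.notMem_of_lt_sInf hlt
    ⟨hj, by have := hmem.2; omega, fun j' h1 h2 => (hmax j' ⟨h1, h2⟩).trans hge⟩

lemma pooledMean_firstIdx_le {n : ℕ → ℝ} (Y : ℕ → ℝ) {t : ℕ} (ht : 1 ≤ t)
    (hn : ∀ h ∈ Set.Icc 1 t, 0 < n h) :
    pooledMean n Y (firstIdx n Y t) t ≤ Y (firstIdx n Y t) := by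
  obtain ⟨⟨hj1, hjt⟩, hmax⟩ := firstIdx_spec n Y ht
  rcases hjt.lt_or_eq with hjt | hjt
  · exact pooledMean_le_of_pooledMean_succ_le hjt
      (fun h hh => hn h (Set.Icc_subset_Icc_left hj1 hh)) (hmax _ ⟨by omega, hjt⟩)
  · rw [hjt, pooledMean_self Y (hn t ⟨ht, le_rfl⟩).ne']

lemma lt_pooledMean_firstIdx {n : ℕ → ℝ} (Y : ℕ → ℝ) {t j : ℕ} (ht : 1 ≤ t)
    (hn : ∀ h ∈ Set.Icc 1 t, 0 < n h) (hj : 1 ≤ j) (hjt : j + 1 = firstIdx n Y t) :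
    Y j < pooledMean n Y (firstIdx n Y t) t := by
  have hjt' := (firstIdx_spec n Y ht).1.2
  have hlt := pooledMean_lt_of_lt_firstIdx n Y ht hj (by omega : j < firstIdx n Y t)
  rw [← hjt] at hlt ⊢
  exact lt_pooledMean_succ_of_pooledMean_lt (by omega)
    (fun h hh => hn h (Set.Icc_subset_Icc_left hj hh)) hlt

lemma pooledMean_firstIdx_eq_of_monotoneOn {n Y : ℕ → ℝ} {t i : ℕ} (ht : 1 ≤ t)
    (hn : ∀ h ∈ Set.Icc 1 t, 0 < n h) (hY : MonotoneOn Y (Set.Icc 1 t))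
    (hi : i ∈ Set.Icc (firstIdx n Y t) t) :
    pooledMean n Y (firstIdx n Y t) t = Y i := by
  obtain ⟨⟨hj1, hjt⟩, hmax⟩ := firstIdx_spec n Y ht
  have hi' : i ∈ Set.Icc 1 t := ⟨hj1.trans hi.1, hi.2⟩
  have hYi : Y i ≤ Y t := hY hi' ⟨ht, le_rfl⟩ hi.2
  have hYj : Y (firstIdx n Y t) ≤ Y i := hY ⟨hj1, hjt⟩ hi' hi.1
  have hYt : Y t ≤ pooledMean n Y (firstIdx n Y t) t := by
    simpa only [pooledMean_self Y (hn t ⟨ht, le_rfl⟩).ne'] using hmax t ⟨ht, le_rfl⟩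
  linarith [pooledMean_firstIdx_le Y ht hn]

lemma sdmmsaAux_eq_of_monotoneOn {n Y : ℕ → ℝ} {fuel t i : ℕ} (hfuel : t ≤ fuel)
    (hn : ∀ h ∈ Set.Icc 1 t, 0 < n h) (hY : MonotoneOn Y (Set.Icc 1 t)) (hi : i ∈ Set.Icc 1 t) :
    sdmmsaAux n Y fuel t i = Y i := by
  induction fuel generalizing t with
  | zero => exact absurd (hi.1.trans hi.2) (by omega)
  | succ fuel ih =>
    have ht : 1 ≤ t := hi.1.trans hi.2
    have hjt := (firstIdx_spec n Y ht).1.2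
    rw [sdmmsaAux]
    split_ifs with hji
    · exact pooledMean_firstIdx_eq_of_monotoneOn ht hn hY ⟨hji, hi.2⟩
    · have hsub : Set.Icc 1 (firstIdx n Y t - 1) ⊆ Set.Icc 1 t :=
        Set.Icc_subset_Icc_right (by omega)
      exact ih (by omega) (fun h hh => hn h (hsub hh)) (hY.mono hsub) ⟨hi.1, by omega⟩

lemma muhat_eq_ite_of_monotoneOn {n Z : ℕ → ℝ} {m i : ℕ}
    (hn : ∀ h ∈ Set.Icc 1 (m + 1), 0 < n h) (hZ : MonotoneOn Z (Set.Icc 1 m))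
    (hi : i ∈ Set.Icc 1 (m + 1)) :
    muhat n Z (m + 1) i =
      if firstIdx n Z (m + 1) ≤ i then pooledMean n Z (firstIdx n Z (m + 1)) (m + 1)
      else Z i := by
  have hjt := (firstIdx_spec n Z (Nat.le_add_left 1 m)).1.2
  rw [muhat, sdmmsaAux]
  split_ifs with hji
  · rfl
  · have hsub : Set.Icc 1 (firstIdx n Z (m + 1) - 1) ⊆ Set.Icc 1 m :=
      Set.Icc_subset_Icc_right (by omega)
    exact sdmmsaAux_eq_of_monotoneOn (by omega)
      (fun h hh => hn h (Set.Icc_subset_Icc_right m.le_succ (hsub hh))) (hZ.mono hsub)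
      ⟨hi.1, by omega⟩

theorem muhat_le_muhat_of_monotoneOn {n Z Z' : ℕ → ℝ} {m i : ℕ}
    (hn : ∀ h ∈ Set.Icc 1 (m + 1), 0 < n h) (hZ : MonotoneOn Z (Set.Icc 1 m))
    (hZ' : MonotoneOn Z' (Set.Icc 1 m)) (hle : ∀ h ∈ Set.Icc 1 (m + 1), Z h ≤ Z' h)
    (hi : i ∈ Set.Icc 1 (m + 1)) :
    muhat n Z (m + 1) i ≤ muhat n Z' (m + 1) i := by
  have ht : 1 ≤ m + 1 := Nat.le_add_left 1 m
  rw [muhat_eq_ite_of_monotoneOn hn hZ hi, muhat_eq_ite_of_monotoneOn hn hZ' hi]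
  set j := firstIdx n Z (m + 1)
  obtain ⟨hi1, hi2⟩ := hi
  obtain ⟨⟨hj1, hjt⟩, -⟩ := firstIdx_spec n Z ht
  have hj't := (firstIdx_spec n Z' ht).1.2
  have hsub : Set.Icc j (m + 1) ⊆ Set.Icc 1 (m + 1) := Set.Icc_subset_Icc_left hj1
  have hcc' : pooledMean n Z j (m + 1) ≤ pooledMean n Z' (firstIdx n Z' (m + 1)) (m + 1) :=
    (pooledMean_mono hjt (fun h hh => hn h (hsub hh)) (fun h hh => hle h (hsub hh))).trans
      ((firstIdx_spec n Z' ht).2 j ⟨hj1, hjt⟩)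
  split_ifs with hji hj'i hj'i
  · exact hcc'
  · calc pooledMean n Z j (m + 1) ≤ Z j := pooledMean_firstIdx_le Z ht hn
      _ ≤ Z' j := hle j ⟨hj1, hjt⟩
      _ ≤ Z' i := hZ' ⟨hj1, by omega⟩ ⟨hi1, by omega⟩ hji
  · refine le_of_lt ?_
    calc Z i ≤ Z (j - 1) := hZ ⟨hi1, by omega⟩ ⟨by omega, by omega⟩ (by omega)
      _ < pooledMean n Z j (m + 1) := lt_pooledMean_firstIdx Z ht hn (by omega) (by omega)
      _ ≤ _ := hcc'
  · exact hle i ⟨hi1, hi2⟩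

theorem sdmmsa_monotone_in_first_m_general (m : ℕ) (n Y Y' : ℕ → ℝ)
    (hn : ∀ h, 1 ≤ h → h ≤ m + 1 → 0 < n h)
    (hY : ∀ v v', 1 ≤ v → v ≤ v' → v' ≤ m → Y v ≤ Y v')
    (hY' : ∀ v v', 1 ≤ v → v ≤ v' → v' ≤ m → Y' v ≤ Y' v')
    (hle : ∀ v, 1 ≤ v → v ≤ m → Y v ≤ Y' v)
    (ylast : ℝ) :
    ∀ i, 1 ≤ i → i ≤ m + 1 →
      muhat n (fun t => if t = m + 1 then ylast else Y t) (m + 1) i ≤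
        muhat n (fun t => if t = m + 1 then ylast else Y' t) (m + 1) i := by
  have hmono (W : ℕ → ℝ) (hW : ∀ v v', 1 ≤ v → v ≤ v' → v' ≤ m → W v ≤ W v') :
      MonotoneOn (fun t => if t = m + 1 then ylast else W t) (Set.Icc 1 m) :=
    fun a ha b hb hab => by
      simp only [if_neg (Nat.ne_of_lt (Nat.lt_succ_of_le ha.2)),
        if_neg (Nat.ne_of_lt (Nat.lt_succ_of_le hb.2))]
      exact hW a b ha.1 hab hb.2
  intro i hi1 hi2
  refine muhat_le_muhat_of_monotoneOn (fun h hh => hn h hh.1 hh.2) (hmono Y hY) (hmono Y' hY')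
    (fun h ⟨h1, h2⟩ => ?_) ⟨hi1, hi2⟩
  split_ifs with hlast
  · exact le_rfl
  · exact hle h h1 (by omega)

/-- Lemma 3: if `Ȳ` and `Ȳ'` are both nondecreasing on `[1,m]` with
`Ȳ_v ≤ Ȳ'_v` for every `v ∈ [1,m]`, then for every `i ∈ [1,m+1]` and every value
`Ȳ_{m+1}` of the last data point,
`μ̂_{i,m+1}(Ȳ_1,…,Ȳ_m,Ȳ_{m+1}) ≤ μ̂_{i,m+1}(Ȳ'_1,…,Ȳ'_m,Ȳ_{m+1})`. -/
theorem sdmmsa_monotone_in_first_m (m : ℕ) (hm : 1 ≤ m) (n Y Y' : ℕ → ℝ)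
    (hn : ∀ h, 1 ≤ h → h ≤ m + 1 → 0 < n h)
    (hY : ∀ v v', 1 ≤ v → v ≤ v' → v' ≤ m → Y v ≤ Y v')
    (hY' : ∀ v v', 1 ≤ v → v ≤ v' → v' ≤ m → Y' v ≤ Y' v')
    (hle : ∀ v, 1 ≤ v → v ≤ m → Y v ≤ Y' v)
    (ylast : ℝ) :
    ∀ i, 1 ≤ i → i ≤ m + 1 →
      muhat n (fun t => if t = m + 1 then ylast else Y t) (m + 1) i ≤
        muhat n (fun t => if t = m + 1 then ylast else Y' t) (m + 1) i :=
  sdmmsa_monotone_in_first_m_general m n Y Y' hn hY hY' hle ylast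
end

section
/- (Equation (2.31): characterization of the first SDMMSA index) Consider data (Ȳ_1,n_1),…,(Ȳ_{m+1},n_{m+1}) such that Ȳ_v is nondecreasing in v for v ∈ [1,m] (Ȳ_{m+1} arbitrary). Let i_1 be the first SDMMSA index for these m+1 data points, i.e., the smallest index attaining max_{1 ≤ j ≤ m+1} Ȳ_{j,m+1}. Then i_1 = min{ v ∈ [1,m+1] : Ȳ_v ≥ Ȳ_{v,m+1} }. -/
open Finset

/-
`Ȳ_{v,m+1}` is a weighted average of `Ȳ_v` and `Ȳ_{v+1,m+1}`, so `Ȳ_{v,m+1} ≤ Ȳ_v` exactly when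
`Ȳ_{v+1,m+1} ≤ Ȳ_{v,m+1}`. Hence `v ↦ Ȳ_{v,m+1}` strictly increases up to the first `v` with
`Ȳ_{v,m+1} ≤ Ȳ_v`; past that point the monotonicity of `Ȳ_v` propagates this inequality, so
`v ↦ Ȳ_{v,m+1}` is nonincreasing from there on, and that `v` is the first maximiser.
-/

namespace SDMMSA

variable {n Y : ℕ → ℝ} {i j : ℕ}

lemma pooledWeight_pos (hn : ∀ h ∈ Icc i j, 0 < n h) (hij : i ≤ j) : 0 < pooledWeight n i j :=
  Finset.sum_pos hn ⟨i, Finset.mem_Icc.2 ⟨le_rfl, hij⟩⟩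

lemma pooledMean_self (hn : n j ≠ 0) : pooledMean n Y j j = Y j := by
  simp only [pooledMean, pooledWeight, Finset.Icc_self, Finset.sum_singleton]
  field_simp

lemma pooledMean_succ_le_iff (hn : ∀ h ∈ Icc i j, 0 < n h) (hij : i < j) :
    pooledMean n Y (i + 1) j ≤ pooledMean n Y i j ↔ pooledMean n Y i j ≤ Y i := by
  have hni : 0 < n i := hn i (Finset.mem_Icc.2 ⟨le_rfl, hij.le⟩)
  have hW : 0 < pooledWeight n (i + 1) j :=
    pooledWeight_pos (fun h hh ↦ hn h (Finset.Icc_subset_Icc_left i.le_succ hh)) hij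
  have hsplit (f : ℕ → ℝ) : ∑ h ∈ Icc i j, f h = f i + ∑ h ∈ Icc (i + 1) j, f h := by
    rw [Finset.Icc_add_one_left_eq_Ioc, Finset.add_sum_Ioc_eq_sum_Icc hij.le]
  simp only [pooledMean, pooledWeight] at hW ⊢
  rw [hsplit, hsplit, div_le_div_iff₀ hW (by positivity), div_le_iff₀ (by positivity)]
  -- both sides say `∑_{h=i+1}^j n_h Y_h ≤ n_{i+1,j} Y_i`
  constructor <;> intro h <;> nlinarith

lemma strictMonoOn_pooledMean {k : ℕ} (hn : ∀ h ∈ Icc i j, 0 < n h) (hk : k ≤ j)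
    (hlt : ∀ v ∈ Ico i k, Y v < pooledMean n Y v j) :
    StrictMonoOn (fun v ↦ pooledMean n Y v j) (Set.Icc i k) := by
  refine strictMonoOn_of_lt_succ Set.ordConnected_Icc fun v _ hv hv' ↦ ?_
  simp only [Order.succ_eq_add_one, Set.mem_Icc] at hv hv' ⊢
  have hstep := pooledMean_succ_le_iff (Y := Y)
    (fun h hh ↦ hn h (Finset.Icc_subset_Icc_left hv.1 hh)) (show v < j by omega)
  exact lt_of_not_ge fun h ↦ (hstep.1 h).not_gt (hlt v (Finset.mem_Ico.2 ⟨hv.1, by omega⟩))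

lemma antitoneOn_pooledMean (hn : ∀ h ∈ Icc i j, 0 < n h) (hY : MonotoneOn Y (Set.Ico i j))
    (hi : pooledMean n Y i j ≤ Y i) :
    AntitoneOn (fun v ↦ pooledMean n Y v j) (Set.Icc i j) := by
  have hn' {v} (hv : i ≤ v) : ∀ h ∈ Icc v j, 0 < n h :=
    fun h hh ↦ hn h (Finset.Icc_subset_Icc_left hv hh)
  have hle : ∀ v, i ≤ v → v < j → pooledMean n Y v j ≤ Y v := by
    intro v hv
    induction v, hv using Nat.le_induction with
    | base => exact fun _ ↦ hi
    | succ v hv ih =>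
      intro hvj
      calc pooledMean n Y (v + 1) j ≤ pooledMean n Y v j :=
            (pooledMean_succ_le_iff (hn' hv) (by omega)).2 (ih (by omega))
        _ ≤ Y v := ih (by omega)
        _ ≤ Y (v + 1) := hY ⟨hv, by omega⟩ ⟨by omega, hvj⟩ v.le_succ
  refine antitoneOn_of_succ_le Set.ordConnected_Icc fun v _ hv hv' ↦ ?_
  simp only [Order.succ_eq_add_one, Set.mem_Icc] at hv hv' ⊢
  exact (pooledMean_succ_le_iff (hn' hv.1) (by omega)).2 (hle v hv.1 (by omega))

lemma firstIdx_eq_of_strictMonoOn_of_antitoneOn {t : ℕ} (hi : 1 ≤ i) (hit : i ≤ t)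
    (hinc : StrictMonoOn (fun v ↦ pooledMean n Y v t) (Set.Icc 1 i))
    (hdec : AntitoneOn (fun v ↦ pooledMean n Y v t) (Set.Icc i t)) :
    firstIdx n Y t = i := by
  refine IsLeast.csInf_eq ⟨⟨hi, hit, fun v hv hvt ↦ ?_⟩, fun v ⟨hv, _, hmax⟩ ↦ ?_⟩
  · rcases le_total v i with hvi | hiv
    · exact hinc.monotoneOn ⟨hv, hvi⟩ ⟨hi, le_rfl⟩ hvi
    · exact hdec ⟨le_rfl, hit⟩ ⟨hiv, hvt⟩ hiv
  · by_contra! hvi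
    exact (hmax i hi hit).not_gt (hinc ⟨hv, hvi.le⟩ ⟨hi, le_rfl⟩ hvi)

end SDMMSA

open SDMMSA in
theorem firstIdx_characterization_general (m : ℕ) (n Y : ℕ → ℝ)
    (hn : ∀ h, 1 ≤ h → h ≤ m + 1 → 0 < n h)
    (hY : ∀ v v', 1 ≤ v → v ≤ v' → v' ≤ m → Y v ≤ Y v') :
    firstIdx n Y (m + 1) =
      sInf {v | 1 ≤ v ∧ v ≤ m + 1 ∧ pooledMean n Y v (m + 1) ≤ Y v} := by
  set S := {v | 1 ≤ v ∧ v ≤ m + 1 ∧ pooledMean n Y v (m + 1) ≤ Y v}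
  have hn' : ∀ h ∈ Icc 1 (m + 1), 0 < n h := fun h hh ↦ by
    obtain ⟨h1, h2⟩ := Finset.mem_Icc.1 hh
    exact hn h h1 h2
  have hlast : m + 1 ∈ S :=
    ⟨by omega, le_rfl, (pooledMean_self (hn _ (by omega) le_rfl).ne').le⟩
  obtain ⟨hi, him, hiY⟩ : sInf S ∈ S := Nat.sInf_mem ⟨_, hlast⟩
  refine firstIdx_eq_of_strictMonoOn_of_antitoneOn hi him
    (strictMonoOn_pooledMean hn' him fun v hv ↦ ?_)
    (antitoneOn_pooledMean (fun h hh ↦ hn' h (Finset.Icc_subset_Icc_left hi hh))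
      (fun v hv w hw hvw ↦ hY v w (hi.trans hv.1) hvw (Nat.lt_succ_iff.1 hw.2)) hiY)
  obtain ⟨hv1, hvi⟩ := Finset.mem_Ico.1 hv
  exact lt_of_not_ge fun hle ↦ Nat.notMem_of_lt_sInf hvi ⟨hv1, by omega, hle⟩

/-- eq. (2.31): if `Ȳ_v` is nondecreasing for `v ∈ [1,m]` (with `Ȳ_{m+1}`
arbitrary), then the first SDMMSA index for the `m+1` data points is
`i_1 = min{ v ∈ [1,m+1] : Ȳ_v ≥ Ȳ_{v,m+1} }`. -/
theorem firstIdx_characterization (m : ℕ) (hm : 1 ≤ m) (n Y : ℕ → ℝ)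
    (hn : ∀ h, 1 ≤ h → h ≤ m + 1 → 0 < n h)
    (hY : ∀ v v', 1 ≤ v → v ≤ v' → v' ≤ m → Y v ≤ Y v') :
    firstIdx n Y (m + 1) =
      sInf {v | 1 ≤ v ∧ v ≤ m + 1 ∧ pooledMean n Y v (m + 1) ≤ Y v} :=
  firstIdx_characterization_general m n Y hn hY
end

section
/- (Theorem 4) Let Ȳ_0, Ȳ_1, …, Ȳ_k, V be independent random variables with Ȳ_i ~ N(μ_i, σ²/n_i) for i = 0,…,k and V ~ χ²_ν (chi-squared with ν degrees of freedom), and set S = σ√(V/ν) and η_i = μ_i − μ_0. Let T : ℝ^k → ℝ be bounded, measurable, and nondecreasing in each coordinate, and for i = 1,…,k let g_i : ℝ^k → ℝ be measurable, nondecreasing in each coordinate, and affinely equivariant: g_i(c t_1 + d, …, c t_k + d) = c g_i(t_1,…,t_k) + d for all constants c > 0 and d. Fix δ ∈ ℝ. Then f(η_1,…,η_k,σ) := E[ T( (g_1(Ȳ_1,…,Ȳ_k) − Ȳ_0 − δ)/S, …, (g_k(Ȳ_1,…,Ȳ_k) − Ȳ_0 − δ)/S ) ] is nondecreasing in each η_i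 when the other η_j and σ > 0 are held fixed. -/
/-! Raising `η_{i₀}` translates `Ȳ_{i₀}` by a nonnegative constant, and translation carries one
product of Gaussians onto the other. Along this coupling the integrand can only increase: the
control `Ȳ₀` and `S` are untouched, each `gᵢ` is monotone, and dividing by `S ≥ 0` preserves
order (when `S = 0` both sides are `T 0`). -/

open MeasureTheory ProbabilityTheory

noncomputable section

/-- The chi-squared distribution with `ν` degrees of freedom: the Gamma distribution with
shape `ν/2` and rate `1/2`. -/
def chiSquared (ν : ℕ) : Measure ℝ := gammaMeasure ((ν : ℝ) / 2) (1 / 2)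

open scoped NNReal

theorem integral_le_integral_of_measurePreserving_of_le_comp {α : Type*} [MeasurableSpace α]
    {μ μ' : Measure α} {Φ : α → α} {h : α → ℝ} (hΦ : MeasurePreserving Φ μ μ')
    (hh : Integrable h μ) (hh' : Integrable h μ') (hle : ∀ᵐ x ∂μ, h x ≤ h (Φ x)) :
    ∫ x, h x ∂μ ≤ ∫ x, h x ∂μ' := by
  calc ∫ x, h x ∂μ ≤ ∫ x, h (Φ x) ∂μ :=
        integral_mono_ae hh (hΦ.integrable_comp_of_integrable hh') hle
    _ = ∫ x, h x ∂μ' := by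
        rw [← hΦ.map_eq] at hh' ⊢
        exact (integral_map hΦ.measurable.aemeasurable hh'.aestronglyMeasurable).symm

theorem measurePreserving_add_right_pi_gaussianReal {ι : Type*} [Fintype ι] (m e : ι → ℝ)
    (s : ι → ℝ≥0) :
    MeasurePreserving (· + e) (Measure.pi fun i => gaussianReal (m i) (s i))
      (Measure.pi fun i => gaussianReal (m i + e i) (s i)) :=
  measurePreserving_pi (f := fun i x => x + e i) _ _
    fun _ => ⟨measurable_add_const _, gaussianReal_map_add_const _⟩

section ContrastStat

variable {k : ℕ} {T : (Fin k → ℝ) → ℝ} {g : Fin k → (Fin k → ℝ) → ℝ} {δ σ ν : ℝ}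

variable (T g δ σ ν) in
/-- Coordinate `0` of `p.1` carries `Ȳ₀`, coordinate `v.succ` carries `Ȳ_{v+1}`, and `p.2` carries
`V`, so that the denominator is `S = σ √(V/ν)`. -/
def contrastStat (p : (Fin (k + 1) → ℝ) × ℝ) : ℝ :=
  T (fun i => (g i (fun v => p.1 v.succ) - p.1 0 - δ) / (σ * Real.sqrt (p.2 / ν)))

theorem measurable_contrastStat (hT : Measurable T) (hg : ∀ i, Measurable (g i)) :
    Measurable (contrastStat T g δ σ ν) := by
  unfold contrastStat
  fun_prop

theorem contrastStat_le_of_le (hσ : 0 ≤ σ) (hT : Monotone T) (hg : ∀ i, Monotone (g i))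
    {x y : Fin (k + 1) → ℝ} (hxy : x ≤ y) (h0 : x 0 = y 0) (s : ℝ) :
    contrastStat T g δ σ ν (x, s) ≤ contrastStat T g δ σ ν (y, s) := by
  refine hT fun i => div_le_div_of_nonneg_right ?_ (mul_nonneg hσ (Real.sqrt_nonneg _))
  dsimp only
  rw [h0]
  gcongr
  exact hg i fun v => hxy v.succ

theorem integral_contrastStat_mono {ρ : Measure ℝ} [IsFiniteMeasure ρ] (hσ : 0 ≤ σ)
    (hTmeas : Measurable T) (hTmono : Monotone T) (hTbdd : ∃ C, ∀ t, |T t| ≤ C)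
    (hgmeas : ∀ i, Measurable (g i)) (hgmono : ∀ i, Monotone (g i))
    (s : Fin (k + 1) → ℝ≥0) {m m' : Fin (k + 1) → ℝ} (hm : m ≤ m') (hm0 : m 0 = m' 0) :
    ∫ p, contrastStat T g δ σ ν p ∂((Measure.pi fun v => gaussianReal (m v) (s v)).prod ρ) ≤
      ∫ p, contrastStat T g δ σ ν p ∂((Measure.pi fun v => gaussianReal (m' v) (s v)).prod ρ) := by
  obtain ⟨e, rfl⟩ : ∃ e, m' = m + e := ⟨m' - m, by simp⟩
  have he : 0 ≤ e := fun v => by simpa using hm v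
  have he0 : e 0 = 0 := by simpa using hm0
  obtain ⟨C, hC⟩ := hTbdd
  have hmeas := measurable_contrastStat (δ := δ) (σ := σ) (ν := ν) hTmeas hgmeas
  have hint : ∀ (μ : Measure ((Fin (k + 1) → ℝ) × ℝ)) [IsFiniteMeasure μ],
      Integrable (contrastStat T g δ σ ν) μ := fun μ _ =>
    Integrable.of_bound hmeas.aestronglyMeasurable C (ae_of_all _ fun p => hC _)
  refine integral_le_integral_of_measurePreserving_of_le_comp
    ((measurePreserving_add_right_pi_gaussianReal m e s).prod (.id ρ))
    (hint _) (hint _) (ae_of_all _ fun ⟨x, t⟩ => ?_)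
  exact contrastStat_le_of_le hσ hTmono hgmono (le_add_of_nonneg_right he) (by simp [he0]) t

end ContrastStat

theorem expectation_monotone_in_eta_general (k : ℕ) (ν : ℕ) (hν : 1 ≤ ν)
    (n : Fin (k + 1) → ℝ)
    (δ μ0 : ℝ) (σ : ℝ) (hσ : 0 < σ)
    (T : (Fin k → ℝ) → ℝ) (hTmeas : Measurable T) (hTmono : Monotone T)
    (hTbdd : ∃ C, ∀ t, |T t| ≤ C)
    (g : Fin k → (Fin k → ℝ) → ℝ)
    (hgmeas : ∀ i, Measurable (g i)) (hgmono : ∀ i, Monotone (g i))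
    (η η' : Fin k → ℝ) (i0 : Fin k)
    (hle : η i0 ≤ η' i0) (heq : ∀ j, j ≠ i0 → η j = η' j) :
    (∫ p : (Fin (k + 1) → ℝ) × ℝ,
        T (fun i => (g i (fun v => p.1 v.succ) - p.1 0 - δ) / (σ * Real.sqrt (p.2 / ν)))
        ∂((Measure.pi fun v : Fin (k + 1) =>
              gaussianReal ((Fin.cons μ0 (fun w => μ0 + η w) : Fin (k + 1) → ℝ) v) ((σ ^ 2 / n v).toNNReal)).prod
            (chiSquared ν))) ≤
    (∫ p : (Fin (k + 1) → ℝ) × ℝ,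
        T (fun i => (g i (fun v => p.1 v.succ) - p.1 0 - δ) / (σ * Real.sqrt (p.2 / ν)))
        ∂((Measure.pi fun v : Fin (k + 1) =>
              gaussianReal ((Fin.cons μ0 (fun w => μ0 + η' w) : Fin (k + 1) → ℝ) v) ((σ ^ 2 / n v).toNNReal)).prod
            (chiSquared ν))) := by
  have hη : η ≤ η' := fun j => if h : j = i0 then h ▸ hle else (heq j h).le
  have : IsProbabilityMeasure (chiSquared ν) :=
    isProbabilityMeasure_gammaMeasure (div_pos (Nat.cast_pos.2 hν) two_pos) (by norm_num)
  exact integral_contrastStat_mono hσ.le hTmeas hTmono hTbdd hgmeas hgmono _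
    (Fin.cons_le_cons.2 ⟨le_rfl, fun w => by simpa using hη w⟩) rfl

/-- Theorem 4: let `Ȳ_0,…,Ȳ_k, V` be independent with `Ȳ_i ~ N(μ_i, σ²/nᵢ)`
(where `μ_0` is the control mean and `μ_i = μ_0 + η_i` for `i ≥ 1`) and `V ~ χ²_ν`, and set
`S = σ√(V/ν)`.  If `T` is bounded, measurable and nondecreasing in each coordinate, and each
`g_i` is measurable, nondecreasing in each coordinate and affinely equivariant, then
`f(η_1,…,η_k,σ) = E[T((g_1(Ȳ_1,…,Ȳ_k) - Ȳ_0 - δ)/S, …, (g_k(Ȳ_1,…,Ȳ_k) - Ȳ_0 - δ)/S)]`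
is nondecreasing in each `η_i` when the other `η_j` and `σ` are held fixed.
(Coordinate `0 : Fin (k+1)` of the first factor carries `Ȳ_0`, coordinate `v.succ`
carries `Ȳ_{v+1}`, and the second factor carries `V`.) -/
theorem expectation_monotone_in_eta (k : ℕ) (hk : 1 ≤ k) (ν : ℕ) (hν : 1 ≤ ν)
    (n : Fin (k + 1) → ℝ) (hn : ∀ v, 0 < n v)
    (δ μ0 : ℝ) (σ : ℝ) (hσ : 0 < σ)
    (T : (Fin k → ℝ) → ℝ) (hTmeas : Measurable T) (hTmono : Monotone T)
    (hTbdd : ∃ C, ∀ t, |T t| ≤ C)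
    (g : Fin k → (Fin k → ℝ) → ℝ)
    (hgmeas : ∀ i, Measurable (g i)) (hgmono : ∀ i, Monotone (g i))
    (hgaff : ∀ i (c d : ℝ), 0 < c →
      ∀ t : Fin k → ℝ, g i (fun v => c * t v + d) = c * g i t + d)
    (η η' : Fin k → ℝ) (i0 : Fin k)
    (hle : η i0 ≤ η' i0) (heq : ∀ j, j ≠ i0 → η j = η' j) :
    (∫ p : (Fin (k + 1) → ℝ) × ℝ,
        T (fun i => (g i (fun v => p.1 v.succ) - p.1 0 - δ) / (σ * Real.sqrt (p.2 / ν)))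
        ∂((Measure.pi fun v : Fin (k + 1) =>
              gaussianReal ((Fin.cons μ0 (fun w => μ0 + η w) : Fin (k + 1) → ℝ) v) ((σ ^ 2 / n v).toNNReal)).prod
            (chiSquared ν))) ≤
    (∫ p : (Fin (k + 1) → ℝ) × ℝ,
        T (fun i => (g i (fun v => p.1 v.succ) - p.1 0 - δ) / (σ * Real.sqrt (p.2 / ν)))
        ∂((Measure.pi fun v : Fin (k + 1) =>
              gaussianReal ((Fin.cons μ0 (fun w => μ0 + η' w) : Fin (k + 1) → ℝ) v) ((σ ^ 2 / n v).toNNReal)).prod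
            (chiSquared ν))) :=
  expectation_monotone_in_eta_general k ν hν n δ μ0 σ hσ T hTmeas hTmono hTbdd g hgmeas hgmono η η'
    i0 hle heq
end
end

section
/- (Lemma 4, monotone comparison form) Let Ȳ_0, Ȳ_1, …, Ȳ_k, V be independent with Ȳ_i ~ N(μ_i, σ²/n_i) and V ~ χ²_ν, and set S = σ√(V/ν). Let μ̂_i = μ̂_i(Ȳ_1,…,Ȳ_k) be the SDMMSA estimate with weights n_1,…,n_k, and for constants c and δ let R^I_{i,c} be the event {(μ̂_i − Ȳ_0 − δ)/S > c}. Then for each i ∈ [1,k], the probability P_{(μ_0,μ_1,…,μ_k)}(R^I_{i,c}) is nondecreasing in each μ_j (j ∈ [1,k]) when μ_0, the other μ_{j'} and σ are held fixed. Consequently, for any monotone configuration μ_1 ≤ … ≤ μ_k with μ_i ≤ μ_0 + δ, P_{(μ_0,μ_1,…,μ_k)}(R^I_{i,c}) ≤ P_{(μ_0,μ'_1,…,μ'_k)}(R^I_{i,c}), where μ'_j = μ_0 + δ for j ≤ i and μ'_j = max(μ_j, μ_0 + δ) for j > i. -/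
open Finset

open MeasureTheory ProbabilityTheory

noncomputable section

/-- The joint law of `(Ȳ_0, (Ȳ_1,…,Ȳ_k), V)`: independent coordinates with
`Ȳ_0 ~ N(μ_0, σ²/n_0)`, `Ȳ_j ~ N(μ_j, σ²/n_j)` (coordinate `v : Fin k` carrying
`Ȳ_{v+1}`) and `V ~ χ²_ν`. -/
def jointLaw (k ν : ℕ) (n0 : ℝ) (n : ℕ → ℝ) (σ μ0 : ℝ) (μ : ℕ → ℝ) :
    Measure (ℝ × (Fin k → ℝ) × ℝ) :=
  (gaussianReal μ0 ((σ ^ 2 / n0).toNNReal)).prod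
    ((Measure.pi fun v : Fin k =>
        gaussianReal (μ ((v : ℕ) + 1)) ((σ ^ 2 / n ((v : ℕ) + 1)).toNNReal)).prod
      (chiSquared ν))

/-- The rejection region `R^I_{i,c} = {(μ̂_i - Ȳ_0 - δ)/S > c}`, where `μ̂_i` is the SDMMSA
estimate computed from `(Ȳ_1,…,Ȳ_k)` and `S = σ√(V/ν)`. -/
def rejRegion (k ν : ℕ) (n : ℕ → ℝ) (σ δ : ℝ) (i : ℕ) (c : ℝ) :
    Set (ℝ × (Fin k → ℝ) × ℝ) :=
  {p | c < (muhat n (fun t => if h : t - 1 < k then p.2.1 ⟨t - 1, h⟩ else 0) k i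
            - p.1 - δ) / (σ * Real.sqrt (p.2.2 / ν))}

/-!
The SDMMSA estimate has the min–max representation
`μ̂_i = min_{i ≤ s ≤ k} max_{1 ≤ j ≤ s} Ȳ_{j,s}` familiar from isotonic regression, so it is a
nondecreasing function of the data `Ȳ_1, …, Ȳ_k`. Raising the means `μ_j` translates the law of
`(Ȳ_1, …, Ȳ_k)` upwards, and the rejection region is stable under such translations because
`S ≥ 0`; hence its probability can only grow. The comparison configuration dominates `μ`
coordinatewise, which gives the second claim.
-/

namespace SDMMSA

/-- `max_{1 ≤ j ≤ s} Ȳ_{j,s}`; the range is `[1, max 1 s]` only to keep it nonempty. -/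
def maxPooledMean (n Y : ℕ → ℝ) (s : ℕ) : ℝ :=
  (Icc 1 (max 1 s)).sup' (nonempty_Icc.2 (le_max_left 1 s)) fun j => pooledMean n Y j s

/-- `min_{i ≤ s ≤ t} max_{1 ≤ j ≤ s} Ȳ_{j,s}`, with the same convention as `maxPooledMean`. -/
def minMaxPooledMean (n Y : ℕ → ℝ) (i t : ℕ) : ℝ :=
  (Icc i (max i t)).inf' (nonempty_Icc.2 (le_max_left i t)) fun s => maxPooledMean n Y s

variable {n Y : ℕ → ℝ}

lemma pooledMean_le_maxPooledMean {j s : ℕ} (hj : 1 ≤ j) (hjs : j ≤ s) :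
    pooledMean n Y j s ≤ maxPooledMean n Y s :=
  le_sup' (fun j => pooledMean n Y j s) (mem_Icc.2 ⟨hj, hjs.trans (le_max_right 1 s)⟩)

lemma maxPooledMean_le {s : ℕ} (hs : 1 ≤ s) {x : ℝ}
    (h : ∀ j, 1 ≤ j → j ≤ s → pooledMean n Y j s ≤ x) : maxPooledMean n Y s ≤ x :=
  sup'_le _ _ fun j hj => by
    rw [mem_Icc, max_eq_right hs] at hj
    exact h j hj.1 hj.2

lemma minMaxPooledMean_le {i s t : ℕ} (his : i ≤ s) (hst : s ≤ t) :
    minMaxPooledMean n Y i t ≤ maxPooledMean n Y s :=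
  inf'_le (fun s => maxPooledMean n Y s) (mem_Icc.2 ⟨his, hst.trans (le_max_right i t)⟩)

lemma le_minMaxPooledMean {i t : ℕ} (hit : i ≤ t) {x : ℝ}
    (h : ∀ s, i ≤ s → s ≤ t → x ≤ maxPooledMean n Y s) : x ≤ minMaxPooledMean n Y i t :=
  le_inf' _ _ fun s hs => by
    rw [mem_Icc, max_eq_right hit] at hs
    exact h s hs.1 hs.2

lemma firstIdx_spec {t : ℕ} (ht : 1 ≤ t) :
    1 ≤ firstIdx n Y t ∧ firstIdx n Y t ≤ t ∧
      ∀ j, 1 ≤ j → j ≤ t → pooledMean n Y j t ≤ pooledMean n Y (firstIdx n Y t) t := by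
  obtain ⟨b, hb, hmax⟩ :=
    exists_max_image (Icc 1 t) (fun j => pooledMean n Y j t) (nonempty_Icc.2 ht)
  rw [mem_Icc] at hb
  exact Nat.sInf_mem (s := {j | 1 ≤ j ∧ j ≤ t ∧ ∀ j', 1 ≤ j' → j' ≤ t →
    pooledMean n Y j' t ≤ pooledMean n Y j t})
    ⟨b, hb.1, hb.2, fun j hj hjt => hmax j (mem_Icc.2 ⟨hj, hjt⟩)⟩

lemma maxPooledMean_eq {t : ℕ} (ht : 1 ≤ t) :
    maxPooledMean n Y t = pooledMean n Y (firstIdx n Y t) t := by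
  obtain ⟨hf1, hft, hmax⟩ := firstIdx_spec (n := n) (Y := Y) ht
  exact le_antisymm (maxPooledMean_le ht hmax) (pooledMean_le_maxPooledMean hf1 hft)

section PositiveWeights

variable {k : ℕ} (hn : ∀ h, 1 ≤ h → h ≤ k → 0 < n h)
include hn

lemma pooledWeight_pos_s16 {j t : ℕ} (hj : 1 ≤ j) (hjt : j ≤ t) (htk : t ≤ k) :
    0 < pooledWeight n j t :=
  sum_pos (fun h hh => hn h (hj.trans (mem_Icc.1 hh).1) ((mem_Icc.1 hh).2.trans htk))
    (nonempty_Icc.2 hjt)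

lemma pooledMean_mono {Y' : ℕ → ℝ} (hY : ∀ h, Y h ≤ Y' h) {j t : ℕ} (hj : 1 ≤ j)
    (hjt : j ≤ t) (htk : t ≤ k) : pooledMean n Y j t ≤ pooledMean n Y' j t := by
  have := pooledWeight_pos_s16 hn hj hjt htk
  unfold pooledMean
  gcongr with h hh
  · exact (hn h (hj.trans (mem_Icc.1 hh).1) ((mem_Icc.1 hh).2.trans htk)).le
  · exact hY h

lemma pooledMean_split {j s t : ℕ} (hj : 1 ≤ j) (hjs : j ≤ s) (hst : s < t) (htk : t ≤ k) :
    (pooledWeight n j s + pooledWeight n (s + 1) t) * pooledMean n Y j t =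
      pooledWeight n j s * pooledMean n Y j s
        + pooledWeight n (s + 1) t * pooledMean n Y (s + 1) t := by
  have hsum (f : ℕ → ℝ) :
      ∑ h ∈ Icc j t, f h = ∑ h ∈ Icc j s, f h + ∑ h ∈ Icc (s + 1) t, f h := by
    simp only [← Ico_add_one_right_eq_Icc]
    exact (sum_Ico_consecutive f (by omega) (by omega)).symm
  have hjt := (pooledWeight_pos_s16 hn hj (hjs.trans hst.le) htk).ne'
  have hjs' := (pooledWeight_pos_s16 hn hj hjs (hst.le.trans htk)).ne'
  have hst' := (pooledWeight_pos_s16 hn (j := s + 1) (by omega) hst htk).ne'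
  have hweight : pooledWeight n j s + pooledWeight n (s + 1) t = pooledWeight n j t :=
    (hsum n).symm
  rw [hweight, pooledMean, pooledMean, pooledMean, mul_div_cancel₀ _ hjt,
    mul_div_cancel₀ _ hjs', mul_div_cancel₀ _ hst']
  exact hsum _

lemma pooledMean_le_pooledMean_left {j s t : ℕ} (hj : 1 ≤ j) (hjs : j ≤ s) (hst : s < t)
    (htk : t ≤ k) (h : pooledMean n Y (s + 1) t ≤ pooledMean n Y j t) :
    pooledMean n Y j t ≤ pooledMean n Y j s := by
  have hsplit := pooledMean_split (Y := Y) hn hj hjs hst htk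
  have := pooledWeight_pos_s16 hn hj hjs (hst.le.trans htk)
  have := pooledWeight_pos_s16 hn (j := s + 1) (by omega) hst htk
  nlinarith

lemma pooledMean_left_le_pooledMean_right {j s t : ℕ} (hj : 1 ≤ j) (hjs : j ≤ s) (hst : s < t)
    (htk : t ≤ k) (h : pooledMean n Y j t ≤ pooledMean n Y (s + 1) t) :
    pooledMean n Y j s ≤ pooledMean n Y (s + 1) t := by
  have hsplit := pooledMean_split (Y := Y) hn hj hjs hst htk
  have := pooledWeight_pos_s16 hn hj hjs (hst.le.trans htk)
  have := pooledWeight_pos_s16 hn (j := s + 1) (by omega) hst htk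
  nlinarith

variable {t : ℕ} (ht : 1 ≤ t) (htk : t ≤ k)
include ht htk

lemma pooledMean_firstIdx_le {s : ℕ} (hfs : firstIdx n Y t ≤ s) (hst : s ≤ t) :
    pooledMean n Y (firstIdx n Y t) t ≤ pooledMean n Y (firstIdx n Y t) s := by
  obtain ⟨hf1, -, hmax⟩ := firstIdx_spec (n := n) (Y := Y) ht
  rcases hst.eq_or_lt with rfl | hst
  · rfl
  · exact pooledMean_le_pooledMean_left hn hf1 hfs hst htk (hmax _ (by omega) hst)

lemma maxPooledMean_le_maxPooledMean {s : ℕ} (hfs : firstIdx n Y t ≤ s) (hst : s ≤ t) :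
    maxPooledMean n Y t ≤ maxPooledMean n Y s := by
  obtain ⟨hf1, -, -⟩ := firstIdx_spec (n := n) (Y := Y) ht
  rw [maxPooledMean_eq ht]
  exact (pooledMean_firstIdx_le hn ht htk hfs hst).trans
    (pooledMean_le_maxPooledMean hf1 hfs)

lemma maxPooledMean_firstIdx_pred_le (hf : 2 ≤ firstIdx n Y t) :
    maxPooledMean n Y (firstIdx n Y t - 1) ≤ maxPooledMean n Y t := by
  obtain ⟨-, hft, hmax⟩ := firstIdx_spec (n := n) (Y := Y) ht
  rw [maxPooledMean_eq ht]
  refine maxPooledMean_le (by omega) fun j hj hjf => ?_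
  have := pooledMean_left_le_pooledMean_right (Y := Y) hn hj hjf (by omega) htk
  rw [Nat.sub_add_cancel (by omega)] at this
  exact this (hmax j hj (by omega))

end PositiveWeights

theorem sdmmsaAux_eq_minMaxPooledMean {k : ℕ} (hn : ∀ h, 1 ≤ h → h ≤ k → 0 < n h)
    {fuel t i : ℕ} (hi : 1 ≤ i) (hit : i ≤ t) (htk : t ≤ k) (hfuel : t ≤ fuel) :
    sdmmsaAux n Y fuel t i = minMaxPooledMean n Y i t := by
  induction fuel generalizing t with
  | zero => omega
  | succ fuel ih =>
    have ht : 1 ≤ t := hi.trans hit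
    obtain ⟨hf1, hft, -⟩ := firstIdx_spec (n := n) (Y := Y) ht
    rw [sdmmsaAux]
    split_ifs with hfi
    · refine le_antisymm (le_minMaxPooledMean hit fun s his hst => ?_) ?_
      · exact (pooledMean_firstIdx_le hn ht htk (hfi.trans his) hst).trans
          (pooledMean_le_maxPooledMean hf1 (hfi.trans his))
      · rw [← maxPooledMean_eq ht]
        exact minMaxPooledMean_le hit le_rfl
    · have hif : i ≤ firstIdx n Y t - 1 := by omega
      rw [ih hif (by omega) (by omega)]
      refine le_antisymm (le_minMaxPooledMean hit fun s his hst => ?_)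
        (le_minMaxPooledMean hif fun s his hsf => minMaxPooledMean_le his (by omega))
      by_cases hsf : s ≤ firstIdx n Y t - 1
      · exact minMaxPooledMean_le his hsf
      · calc minMaxPooledMean n Y i (firstIdx n Y t - 1)
            ≤ maxPooledMean n Y (firstIdx n Y t - 1) := minMaxPooledMean_le hif le_rfl
          _ ≤ maxPooledMean n Y t := maxPooledMean_firstIdx_pred_le hn ht htk (by omega)
          _ ≤ maxPooledMean n Y s := maxPooledMean_le_maxPooledMean hn ht htk (by omega) hst

theorem muhat_eq_minMaxPooledMean {k i : ℕ} (hn : ∀ h, 1 ≤ h → h ≤ k → 0 < n h)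
    (hi : 1 ≤ i) (hik : i ≤ k) : muhat n Y k i = minMaxPooledMean n Y i k :=
  sdmmsaAux_eq_minMaxPooledMean hn hi hik le_rfl le_rfl

theorem muhat_mono {Y' : ℕ → ℝ} {k i : ℕ} (hn : ∀ h, 1 ≤ h → h ≤ k → 0 < n h)
    (hY : ∀ h, Y h ≤ Y' h) (hi : 1 ≤ i) (hik : i ≤ k) : muhat n Y k i ≤ muhat n Y' k i := by
  rw [muhat_eq_minMaxPooledMean hn hi hik, muhat_eq_minMaxPooledMean hn hi hik]
  refine le_minMaxPooledMean hik fun s his hsk => (minMaxPooledMean_le his hsk).trans ?_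
  refine maxPooledMean_le (by omega) fun j hj hjs => ?_
  exact (pooledMean_mono hn hY hj hjs hsk).trans (pooledMean_le_maxPooledMean hj hjs)

end SDMMSA

lemma pi_gaussianReal_map_add_const {ι : Type*} [Fintype ι] (m d : ι → ℝ) (v : ι → NNReal) :
    (Measure.pi fun i => gaussianReal (m i) (v i)).map (· + d) =
      Measure.pi fun i => gaussianReal (m i + d i) (v i) := by
  simp_rw [← gaussianReal_map_add_const (d _)]
  exact Measure.pi_map_pi (hμ := fun i => by rw [gaussianReal_map_add_const]; infer_instance)
    fun i => (measurable_add_const _).aemeasurable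

def translateMeans {k : ℕ} (d : Fin k → ℝ) : ℝ × (Fin k → ℝ) × ℝ → ℝ × (Fin k → ℝ) × ℝ :=
  Prod.map id (Prod.map (· + d) id)

lemma jointLaw_eq_map_translateMeans {k ν : ℕ} {n0 : ℝ} {n : ℕ → ℝ} {σ μ0 : ℝ}
    {μ μ' : ℕ → ℝ} (d : Fin k → ℝ) (hμ : ∀ v : Fin k, μ' (v + 1) = μ (v + 1) + d v) :
    jointLaw k ν n0 n σ μ0 μ' = (jointLaw k ν n0 n σ μ0 μ).map (translateMeans d) := by
  have : SFinite (chiSquared ν) := by unfold chiSquared gammaMeasure; infer_instance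
  simp only [jointLaw, translateMeans, hμ, ← pi_gaussianReal_map_add_const]
  rw [← Measure.map_prod_map _ _ measurable_id ((measurable_add_const d).prodMap measurable_id),
    ← Measure.map_prod_map _ _ (measurable_add_const d) measurable_id, Measure.map_id,
    Measure.map_id]

lemma rejRegion_subset_preimage_translateMeans {k ν : ℕ} {n : ℕ → ℝ}
    (hn : ∀ h, 1 ≤ h → h ≤ k → 0 < n h) {σ : ℝ} (hσ : 0 ≤ σ) (δ : ℝ) {i : ℕ} (hi : 1 ≤ i)
    (hik : i ≤ k) (c : ℝ) {d : Fin k → ℝ} (hd : 0 ≤ d) :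
    rejRegion k ν n σ δ i c ⊆ translateMeans d ⁻¹' rejRegion k ν n σ δ i c := by
  intro p hp
  simp only [rejRegion, translateMeans, Set.mem_preimage, Set.mem_ofPred_eq, Prod.map_fst,
    Prod.map_snd, id_eq] at hp ⊢
  refine hp.trans_le (div_le_div_of_nonneg_right ?_ (by positivity))
  gcongr
  refine SDMMSA.muhat_mono hn (fun t => ?_) hi hik
  split_ifs
  exacts [le_add_of_nonneg_right (hd _), le_rfl]

theorem jointLaw_rejRegion_mono {k ν : ℕ} {n0 : ℝ} {n : ℕ → ℝ}
    (hn : ∀ h, 1 ≤ h → h ≤ k → 0 < n h) {σ : ℝ} (hσ : 0 ≤ σ) (δ c μ0 : ℝ) {i : ℕ} (hi : 1 ≤ i)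
    (hik : i ≤ k) {μ μ' : ℕ → ℝ} (hμ : ∀ j, 1 ≤ j → j ≤ k → μ j ≤ μ' j) :
    jointLaw k ν n0 n σ μ0 μ (rejRegion k ν n σ δ i c) ≤
      jointLaw k ν n0 n σ μ0 μ' (rejRegion k ν n σ δ i c) := by
  let d : Fin k → ℝ := fun v => μ' (v + 1) - μ (v + 1)
  rw [jointLaw_eq_map_translateMeans (μ' := μ') d fun v => (add_sub_cancel _ _).symm]
  calc _ ≤ jointLaw k ν n0 n σ μ0 μ (translateMeans d ⁻¹' rejRegion k ν n σ δ i c) :=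
        measure_mono (rejRegion_subset_preimage_translateMeans hn hσ δ hi hik c
          fun v => sub_nonneg.2 (hμ _ (by omega) (by omega)))
    _ ≤ _ := Measure.le_map_apply
        (measurable_id.prodMap ((measurable_add_const d).prodMap measurable_id)).aemeasurable _

theorem rejRegion_prob_monotone_general (k : ℕ) (ν : ℕ)
    (n0 : ℝ) (n : ℕ → ℝ) (hn : ∀ h, 1 ≤ h → h ≤ k → 0 < n h)
    (σ : ℝ) (hσ : 0 < σ) (δ : ℝ) (c : ℝ) (μ0 : ℝ)
    (i : ℕ) (hi1 : 1 ≤ i) (hik : i ≤ k) :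
    (∀ j, 1 ≤ j → j ≤ k → ∀ μ μ' : ℕ → ℝ,
      μ j ≤ μ' j → (∀ j', j' ≠ j → μ j' = μ' j') →
      jointLaw k ν n0 n σ μ0 μ (rejRegion k ν n σ δ i c) ≤
        jointLaw k ν n0 n σ μ0 μ' (rejRegion k ν n σ δ i c)) ∧
    (∀ μ : ℕ → ℝ, (∀ j j', 1 ≤ j → j ≤ j' → j' ≤ k → μ j ≤ μ j') → μ i ≤ μ0 + δ →
      jointLaw k ν n0 n σ μ0 μ (rejRegion k ν n σ δ i c) ≤
        jointLaw k ν n0 n σ μ0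
          (fun j => if j ≤ i then μ0 + δ else max (μ j) (μ0 + δ))
          (rejRegion k ν n σ δ i c)) := by
  refine ⟨fun j _ _ μ μ' hj hother => ?_, fun μ hmono hμi => ?_⟩
  · refine jointLaw_rejRegion_mono hn hσ.le δ c μ0 hi1 hik fun j' _ _ => ?_
    rcases eq_or_ne j' j with rfl | hj'
    exacts [hj, (hother j' hj').le]
  · refine jointLaw_rejRegion_mono hn hσ.le δ c μ0 hi1 hik fun j hj hjk => ?_
    split_ifs with hji
    exacts [(hmono j i hj hji hik).trans hμi, le_max_left _ _]

/-- Lemma 4, monotone comparison form: the probability of the rejection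
region `R^I_{i,c}` is nondecreasing in each `μ_j`, `j ∈ [1,k]` (with `μ_0`, the other
means and `σ` fixed); consequently, for any monotone configuration `μ_1 ≤ … ≤ μ_k` with
`μ_i ≤ μ_0 + δ`, the probability is at most the one obtained at the configuration
`μ'_j = μ_0 + δ` for `j ≤ i` and `μ'_j = max(μ_j, μ_0 + δ)` for `j > i`. -/
theorem rejRegion_prob_monotone (k : ℕ) (hk : 1 ≤ k) (ν : ℕ) (hν : 1 ≤ ν)
    (n0 : ℝ) (hn0 : 0 < n0) (n : ℕ → ℝ) (hn : ∀ h, 1 ≤ h → h ≤ k → 0 < n h)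
    (σ : ℝ) (hσ : 0 < σ) (δ : ℝ) (hδ : 0 ≤ δ) (c : ℝ) (μ0 : ℝ)
    (i : ℕ) (hi1 : 1 ≤ i) (hik : i ≤ k) :
    (∀ j, 1 ≤ j → j ≤ k → ∀ μ μ' : ℕ → ℝ,
      μ j ≤ μ' j → (∀ j', j' ≠ j → μ j' = μ' j') →
      jointLaw k ν n0 n σ μ0 μ (rejRegion k ν n σ δ i c) ≤
        jointLaw k ν n0 n σ μ0 μ' (rejRegion k ν n σ δ i c)) ∧
    (∀ μ : ℕ → ℝ, (∀ j j', 1 ≤ j → j ≤ j' → j' ≤ k → μ j ≤ μ j') → μ i ≤ μ0 + δ →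
      jointLaw k ν n0 n σ μ0 μ (rejRegion k ν n σ δ i c) ≤
        jointLaw k ν n0 n σ μ0
          (fun j => if j ≤ i then μ0 + δ else max (μ j) (μ0 + δ))
          (rejRegion k ν n σ δ i c)) :=
  rejRegion_prob_monotone_general k ν n0 n hn σ hσ δ c μ0 i hi1 hik
end
end

section
/- (Theorem 6: strong control of the experimentwise error rate for nested hypotheses with nested rejection regions) Let Θ be a set of parameters, and for each θ ∈ Θ let P_θ be a probability measure on a common measurable space. Let H_1 ⊇ H_2 ⊇ … ⊇ H_k be a decreasing sequence of subsets of Θ (null hypotheses), let R_1 ⊆ R_2 ⊆ … ⊆ R_k be an increasing sequence of measurable events (rejection regions), and let α ∈ (0,1). Suppose each test is of level α: for every i ∈ [1,k] and every θ ∈ H_i, P_θ(R_i) ≤ α. Consider the multiple testing procedure that rejects H_i exactly when R_i occurs. Then for every θ ∈ Θ, the probability of making at least one incorrect assertion is at most α: P_θ( ∪_{i : θ ∈ H_i} R_i ) ≤ α. -/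
open MeasureTheory

/-! Let `m` be the largest index of a hypothesis true at `θ`. Since the rejection regions
increase, rejecting any true hypothesis means that `R_m` occurred, so the probability of an
incorrect assertion is at most `P_θ(R_m) ≤ α`, the level of the test of the true hypothesis
`H_m`. -/

theorem Set.biUnion_subset_of_isGreatest {ι β : Type*} [Preorder ι] {f : ι → Set β}
    {s : Set ι} {m : ι} (hf : MonotoneOn f s) (hm : IsGreatest s m) :
    ⋃ i ∈ s, f i ⊆ f m :=
  Set.iUnion₂_subset fun _ hi => hf hi hm.1 (hm.2 hi)

theorem MeasureTheory.measure_biUnion_le_of_monotoneOn {Ω ι : Type*} [MeasurableSpace Ω]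
    [LinearOrder ι] {μ : Measure Ω} {R : ι → Set Ω} {s : Set ι} {α : ENNReal}
    (hs : s.Finite) (hR : MonotoneOn R s) (hle : ∀ i ∈ s, μ (R i) ≤ α) :
    μ (⋃ i ∈ s, R i) ≤ α := by
  rcases s.eq_empty_or_nonempty with rfl | hne
  · simp
  obtain ⟨m, hm, hmax⟩ := Set.exists_max_image s id hs hne
  calc μ (⋃ i ∈ s, R i) ≤ μ (R m) :=
        measure_mono (Set.biUnion_subset_of_isGreatest hR ⟨hm, hmax⟩)
    _ ≤ α := hle m hm

theorem strong_control_nested_general {Ω Θ : Type*} [MeasurableSpace Ω]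
    (P : Θ → Measure Ω)
    (k : ℕ) (H : ℕ → Set Θ) (R : ℕ → Set Ω)
    (hR : ∀ i i', 1 ≤ i → i ≤ i' → i' ≤ k → R i ⊆ R i')
    (α : ENNReal)
    (hlevel : ∀ i, 1 ≤ i → i ≤ k → ∀ θ ∈ H i, P θ (R i) ≤ α) :
    ∀ θ, P θ (⋃ i ∈ {i : ℕ | 1 ≤ i ∧ i ≤ k ∧ θ ∈ H i}, R i) ≤ α := by
  intro θ
  have hsub : {i : ℕ | 1 ≤ i ∧ i ≤ k ∧ θ ∈ H i} ⊆ Set.Icc 1 k := fun i hi => ⟨hi.1, hi.2.1⟩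
  refine measure_biUnion_le_of_monotoneOn ((Set.finite_Icc 1 k).subset hsub) ?_
    fun i hi => hlevel i hi.1 hi.2.1 θ hi.2.2
  exact fun i hi j hj hij => hR i j hi.1 hij hj.2.1

/-- Theorem 6: strong control of the experimentwise error rate for a
decreasing sequence of null hypotheses `H_1 ⊇ … ⊇ H_k` tested with an increasing sequence
of level-`α` rejection regions `R_1 ⊆ … ⊆ R_k`: for every parameter `θ`, the probability
of rejecting at least one true hypothesis is at most `α`. -/
theorem strong_control_nested {Ω Θ : Type*} [MeasurableSpace Ω]
    (P : Θ → Measure Ω) (hP : ∀ θ, IsProbabilityMeasure (P θ))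
    (k : ℕ) (H : ℕ → Set Θ) (R : ℕ → Set Ω)
    (hH : ∀ i i', 1 ≤ i → i ≤ i' → i' ≤ k → H i' ⊆ H i)
    (hR : ∀ i i', 1 ≤ i → i ≤ i' → i' ≤ k → R i ⊆ R i')
    (hRmeas : ∀ i, 1 ≤ i → i ≤ k → MeasurableSet (R i))
    (α : ENNReal) (hα0 : 0 < α) (hα1 : α < 1)
    (hlevel : ∀ i, 1 ≤ i → i ≤ k → ∀ θ ∈ H i, P θ (R i) ≤ α) :
    ∀ θ, P θ (⋃ i ∈ {i : ℕ | 1 ≤ i ∧ i ≤ k ∧ θ ∈ H i}, R i) ≤ α :=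
  strong_control_nested_general P k H R hR α hlevel
end
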